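/- Let N ≥ 2 be an even integer. Then I_N(R₁,R₂) ≍ (R₁R₂)^{N²/4} as R₁R₂ → ∞; that is, there exist constants C₁, C₂ > 0 and T > 1 such that for all R₁, R₂ > 0 with R₁R₂ ≥ T, one has C₁ ≤ I_N(R₁,R₂) / (R₁R₂)^{N²/4} ≤ C₂. -/

import Mathlib

/-!
Write `N = 2M` and `e_j = N - 1 - 2j`; these exponents are positive for `j < M`, negative for
`j ≥ M`, and `∑_{j<M} e_j = M² = -∑_{j≥M} e_j`.

Upper bound: on the ordered region `0 ≤ σ_j² - σ_k² ≤ σ_j²`, so the integrand is at most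
`∏ σ_j^(e_j - 1)`. Over the full box `[1/R₂, R₁]^N` this integral factorizes, and
`∫ x^(e-1) ≤ R₁^e` for `e > 0`, `≤ (1/R₂)^e` for `e < 0`; the product is `(R₁R₂)^(M²)`.

Lower bound: if `4 c_k ≤ c_j` for `j < k`, the box `∏ [c_j, 2c_j]` lies in the ordered region and
there `σ_j² - σ_k² ≥ (3/4) c_j²`, so the integral is at least a constant times `∏ c_j^(e_j)`.
Taking `c_j ≍ R₁ 4^(-j)` for `j < M` and `c_j ≍ 4^(N-j) / R₂` for `j ≥ M` (possible once
`R₁R₂ ≥ 2·4^N`, so that the two halves do not collide) gives a constant times `(R₁R₂)^(M²)`.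
-/

open MeasureTheory Real Finset

/-- The volume integral `I_N(R₁,R₂)` over ordered tuples `R₁ > σ₁ > ⋯ > σ_N > 1/R₂`
of `∏ σ_l^{-N} ∏_{j<k} (σ_j² - σ_k²)`. -/
noncomputable def volI (N : ℕ) (R₁ R₂ : ℝ) : ℝ :=
  ∫ σ in {σ : Fin N → ℝ | (∀ i, 1 / R₂ < σ i ∧ σ i < R₁) ∧
      ∀ i j : Fin N, i < j → σ j < σ i},
    (∏ l, ((σ l) ^ N)⁻¹) * ∏ j, ∏ k ∈ Finset.Ioi j, ((σ j) ^ 2 - (σ k) ^ 2)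

theorem setIntegral_univ_pi_prod {ι E : Type*} [Fintype ι] [MeasureSpace E]
    [SigmaFinite (volume : Measure E)] (s : ι → Set E) (f : ι → E → ℝ) :
    ∫ σ in Set.univ.pi s, ∏ i, f i (σ i) = ∏ i, ∫ x in s i, f i x := by
  rw [volume_pi, Measure.restrict_pi_pi, integral_fintype_prod_eq_prod]

section ZpowIntegral
variable {a b : ℝ}

theorem integral_Icc_zpow_sub_one (ha : 0 < a) (hab : a ≤ b) {d : ℤ} (hd : d ≠ 0) :
    ∫ x in Set.Icc a b, x ^ (d - 1) = (b ^ d - a ^ d) / d := by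
  have h0 : (0 : ℝ) ∉ Set.uIcc a b := by
    rw [Set.uIcc_of_le hab]
    exact fun h => ha.not_ge h.1
  rw [integral_Icc_eq_integral_Ioc, ← intervalIntegral.integral_of_le hab,
    integral_zpow (.inr ⟨by omega, h0⟩)]
  simp

theorem integral_Icc_zpow_sub_one_le_of_pos (ha : 0 < a) (hab : a ≤ b) {d : ℤ} (hd : 0 < d) :
    ∫ x in Set.Icc a b, x ^ (d - 1) ≤ b ^ d := by
  rw [integral_Icc_zpow_sub_one ha hab hd.ne', div_le_iff₀ (by exact_mod_cast hd)]
  have : (1 : ℝ) ≤ d := by exact_mod_cast hd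
  nlinarith [zpow_pos ha d, zpow_pos (ha.trans_le hab) d]

theorem integral_Icc_zpow_sub_one_le_of_neg (ha : 0 < a) (hab : a ≤ b) {d : ℤ} (hd : d < 0) :
    ∫ x in Set.Icc a b, x ^ (d - 1) ≤ a ^ d := by
  rw [integral_Icc_zpow_sub_one ha hab hd.ne, div_le_iff_of_neg (by exact_mod_cast hd)]
  have : (d : ℝ) ≤ -1 := by exact_mod_cast (by omega : d ≤ -1)
  nlinarith [zpow_pos ha d, zpow_pos (ha.trans_le hab) d]

end ZpowIntegral

namespace VolI

def orderedTuples (n : ℕ) (a b : ℝ) : Set (Fin n → ℝ) :=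
  {σ | (∀ i, a < σ i ∧ σ i < b) ∧ ∀ i j : Fin n, i < j → σ j < σ i}

noncomputable def weight {n : ℕ} (σ : Fin n → ℝ) : ℝ :=
  (∏ l, (σ l ^ n)⁻¹) * ∏ j, ∏ k ∈ Ioi j, (σ j ^ 2 - σ k ^ 2)

theorem volI_eq (N : ℕ) (R₁ R₂ : ℝ) :
    volI N R₁ R₂ = ∫ σ in orderedTuples N (1 / R₂) R₁, weight σ :=
  rfl

section Weight
variable {n : ℕ} {a b : ℝ}

theorem measurableSet_orderedTuples : MeasurableSet (orderedTuples n a b) := by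
  simp only [orderedTuples, Set.ofPred_and, Set.ofPred_forall]
  refine .inter (.iInter fun i => .inter ?_ ?_) (.iInter fun i => .iInter fun j => ?_)
  · exact measurableSet_lt measurable_const (measurable_pi_apply i)
  · exact measurableSet_lt (measurable_pi_apply i) measurable_const
  · by_cases hij : i < j
    · simpa [hij] using measurableSet_lt (measurable_pi_apply j) (measurable_pi_apply i)
    · simp [hij]

theorem orderedTuples_subset_Icc :
    orderedTuples n a b ⊆ Set.Icc (fun _ => a) (fun _ => b) :=
  fun _ hσ => ⟨fun i => (hσ.1 i).1.le, fun i => (hσ.1 i).2.le⟩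

theorem Icc_subset_orderedTuples {c : Fin n → ℝ} (hc : ∀ j k, j < k → 4 * c k ≤ c j)
    (ha : 0 ≤ a) (hac : ∀ j, a < c j) (hcb : ∀ j, 2 * c j < b) :
    Set.Icc c (fun j => 2 * c j) ⊆ orderedTuples n a b := by
  intro σ hσ
  refine ⟨fun i => ⟨(hac i).trans_le (hσ.1 i), (hσ.2 i).trans_lt (hcb i)⟩, fun j k hjk => ?_⟩
  have := hc j k hjk
  have := hσ.1 j; have := hσ.2 k; have := ha.trans_lt (hac k)
  linarith

theorem sq_sub_sq_nonneg_of_mem_orderedTuples (ha : 0 ≤ a) {σ : Fin n → ℝ}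
    (hσ : σ ∈ orderedTuples n a b) {j k : Fin n} (hjk : j < k) :
    0 ≤ σ j ^ 2 - σ k ^ 2 := by
  have := hσ.2 j k hjk
  have := ha.trans_lt (hσ.1 k).1
  nlinarith

theorem integrableOn_weight_Icc (ha : 0 < a) :
    IntegrableOn (weight (n := n)) (Set.Icc (fun _ => a) (fun _ => b)) := by
  refine ContinuousOn.integrableOn_compact isCompact_Icc
    (.mul (continuousOn_finsetProd _ fun l _ => ?_) (by fun_prop))
  exact ((continuous_apply l).continuousOn.pow n).inv₀ fun σ hσ =>
    pow_ne_zero _ (ha.trans_le (hσ.1 l)).ne'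

theorem weight_nonneg (ha : 0 ≤ a) {σ : Fin n → ℝ} (hσ : σ ∈ orderedTuples n a b) :
    0 ≤ weight σ :=
  mul_nonneg (prod_nonneg fun l _ => inv_nonneg.2 (pow_nonneg (ha.trans (hσ.1 l).1.le) n))
    (prod_nonneg fun _ _ => prod_nonneg fun _ hk =>
      sq_sub_sq_nonneg_of_mem_orderedTuples ha hσ (mem_Ioi.mp hk))

theorem weight_le_prod_zpow (ha : 0 ≤ a) {σ : Fin n → ℝ} (hσ : σ ∈ orderedTuples n a b) :
    weight σ ≤ ∏ j : Fin n, σ j ^ ((n : ℤ) - 1 - 2 * j - 1) := by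
  have hpos : ∀ l, 0 < σ l := fun l => ha.trans_lt (hσ.1 l).1
  have hzpow : ∀ j : Fin n, σ j ^ ((n : ℤ) - 1 - 2 * j - 1) =
      (∏ _k ∈ Ioi j, σ j ^ 2) * (σ j ^ n)⁻¹ := by
    intro j
    rw [prod_const, Fin.card_Ioi, ← pow_mul, ← zpow_natCast, ← zpow_natCast, ← zpow_neg,
      ← zpow_add₀ (hpos j).ne']
    congr 1
    have := j.isLt
    push_cast [Nat.cast_sub (by omega : (j : ℕ) ≤ n - 1), Nat.cast_sub (by omega : 1 ≤ n)]
    ring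
  have hdiff := fun j k (hk : k ∈ Ioi j) =>
    sq_sub_sq_nonneg_of_mem_orderedTuples ha hσ (mem_Ioi.mp hk)
  simp only [hzpow, prod_mul_distrib, weight]
  rw [mul_comm]
  exact mul_le_mul_of_nonneg_right
    (prod_le_prod (fun j _ => prod_nonneg (hdiff j)) fun j _ =>
      prod_le_prod (hdiff j) fun k _ => sub_le_self _ (sq_nonneg _))
    (prod_nonneg fun l _ => inv_nonneg.2 (pow_nonneg (hpos l).le n))

theorem weight_ge_of_mem_Icc {c : Fin n → ℝ} (hc0 : ∀ j, 0 < c j)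
    (hc : ∀ j k, j < k → 4 * c k ≤ c j) {σ : Fin n → ℝ}
    (hσ : σ ∈ Set.Icc c (fun j => 2 * c j)) :
    (∏ l, ((2 * c l) ^ n)⁻¹) * ∏ j, ∏ _k ∈ Ioi j, (3 / 4 * c j ^ 2) ≤ weight σ := by
  have hσ0 : ∀ l, 0 < σ l := fun l => (hc0 l).trans_le (hσ.1 l)
  refine mul_le_mul (prod_le_prod (fun l _ => by have := hc0 l; positivity) fun l _ => ?_)
    (prod_le_prod (fun j _ => prod_nonneg fun _ _ => by positivity) fun j _ =>
      prod_le_prod (fun _ _ => by positivity) fun k hk => ?_)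
    (prod_nonneg fun j _ => prod_nonneg fun _ _ => by positivity)
    (prod_nonneg fun l _ => by have := hσ0 l; positivity)
  · exact inv_anti₀ (pow_pos (hσ0 l) n) (pow_le_pow_left₀ (hσ0 l).le (hσ.2 l) n)
  · have := hc j k (mem_Ioi.mp hk)
    have : σ k ≤ 2 * c k := hσ.2 k
    have := hσ.1 j; have := hσ0 k; have := hc0 j
    nlinarith

theorem integral_weight_le_prod_integral (ha : 0 < a) :
    ∫ σ in orderedTuples n a b, weight σ ≤
      ∏ j : Fin n, ∫ x in Set.Icc a b, x ^ ((n : ℤ) - 1 - 2 * j - 1) := by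
  let g : (Fin n → ℝ) → ℝ := fun σ => ∏ j : Fin n, σ j ^ ((n : ℤ) - 1 - 2 * j - 1)
  have hg_int : IntegrableOn g (Set.Icc (fun _ => a) (fun _ => b)) :=
    ContinuousOn.integrableOn_compact isCompact_Icc (continuousOn_finsetProd _ fun j _ =>
      (continuous_apply j).continuousOn.zpow₀ _ fun σ hσ => .inl (ha.trans_le (hσ.1 j)).ne')
  have hg_nonneg : 0 ≤ᵐ[volume.restrict (Set.Icc (fun _ => a) (fun _ => b))] g :=
    (ae_restrict_iff' measurableSet_Icc).mpr (ae_of_all _ fun σ hσ =>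
      prod_nonneg fun j _ => (zpow_pos (ha.trans_le (hσ.1 j)) _).le)
  calc ∫ σ in orderedTuples n a b, weight σ
      ≤ ∫ σ in orderedTuples n a b, g σ :=
        setIntegral_mono_on ((integrableOn_weight_Icc ha).mono_set orderedTuples_subset_Icc)
          (hg_int.mono_set orderedTuples_subset_Icc) measurableSet_orderedTuples
          fun σ hσ => weight_le_prod_zpow ha.le hσ
    _ ≤ ∫ σ in Set.Icc (fun _ => a) (fun _ => b), g σ :=
        setIntegral_mono_set hg_int hg_nonneg orderedTuples_subset_Icc.eventuallyLE
    _ = _ := by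
        rw [← Set.pi_univ_Icc]
        exact setIntegral_univ_pi_prod (ι := Fin n) (fun _ => Set.Icc a b) fun j x =>
          x ^ ((n : ℤ) - 1 - 2 * j - 1)

theorem prod_le_integral_weight {c : Fin n → ℝ} (hc : ∀ j k, j < k → 4 * c k ≤ c j)
    (ha : 0 < a) (hac : ∀ j, a < c j) (hcb : ∀ j, 2 * c j < b) :
    ∏ j : Fin n, ((2 ^ n)⁻¹ * (3 / 4) ^ (n - 1 - j : ℕ) * c j ^ ((n : ℤ) - 1 - 2 * j)) ≤
      ∫ σ in orderedTuples n a b, weight σ := by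
  have hc0 : ∀ j, 0 < c j := fun j => ha.trans (hac j)
  have hPS := Icc_subset_orderedTuples hc ha.le hac hcb
  have hint := (integrableOn_weight_Icc (n := n) (b := b) ha).mono_set orderedTuples_subset_Icc
  have hnonneg : 0 ≤ᵐ[volume.restrict (orderedTuples n a b)] weight :=
    (ae_restrict_iff' measurableSet_orderedTuples).mpr
      (ae_of_all _ fun σ hσ => weight_nonneg ha.le hσ)
  have hvol : volume.real (Set.Icc c fun j => 2 * c j) = ∏ j, c j := by
    rw [measureReal_def, Real.volume_Icc_pi_toReal fun j => by linarith [hc0 j]]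
    exact prod_congr rfl fun j _ => by ring
  have hfactor (j : Fin n) : ((2 * c j) ^ n)⁻¹ * (3 / 4 * c j ^ 2) ^ (n - 1 - j : ℕ) * c j =
      (2 ^ n)⁻¹ * (3 / 4) ^ (n - 1 - j : ℕ) * c j ^ ((n : ℤ) - 1 - 2 * j) := by
    have := j.isLt
    have hexp : (n : ℤ) - 1 - 2 * j = ((2 * (n - 1 - j) + 1 : ℕ) : ℤ) - n := by
      push_cast [Nat.cast_sub (by omega : (j : ℕ) ≤ n - 1), Nat.cast_sub (by omega : 1 ≤ n)]
      ring
    rw [hexp, zpow_sub₀ (hc0 j).ne', zpow_natCast, zpow_natCast, mul_pow, pow_add, pow_mul]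
    field_simp
    ring
  calc ∏ j : Fin n, ((2 ^ n)⁻¹ * (3 / 4) ^ (n - 1 - j : ℕ) * c j ^ ((n : ℤ) - 1 - 2 * j))
      = ((∏ l, ((2 * c l) ^ n)⁻¹) * ∏ j, ∏ _k ∈ Ioi j, (3 / 4 * c j ^ 2)) *
          volume.real (Set.Icc c fun j => 2 * c j) := by
        simp only [hvol, prod_const, Fin.card_Ioi, ← prod_mul_distrib, hfactor]
    _ ≤ ∫ σ in Set.Icc c (fun j => 2 * c j), weight σ :=
        setIntegral_ge_of_const_le_real measurableSet_Icc measure_Icc_lt_top.ne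
          (fun σ hσ => weight_ge_of_mem_Icc hc0 hc hσ) (hint.mono_set hPS)
    _ ≤ ∫ σ in orderedTuples n a b, weight σ :=
        setIntegral_mono_set hint hnonneg hPS.eventuallyLE

end Weight

theorem prod_range_zpow_sub_two_mul {x : ℝ} (hx : x ≠ 0) (c : ℤ) (M : ℕ) :
    ∏ j ∈ range M, x ^ (c - 2 * j) = x ^ (M * (c - M + 1)) := by
  induction M with
  | zero => simp
  | succ M ih =>
    rw [prod_range_succ, ih, ← zpow_add₀ hx]
    congr 1
    push_cast
    ring

theorem prod_ite_zpow {M : ℕ} {x y : ℝ} (hx : x ≠ 0) (hy : y ≠ 0) :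
    ∏ j : Fin (2 * M), (if (j : ℕ) < M then x else y) ^ ((2 * M : ℕ) - 1 - 2 * j : ℤ) =
      x ^ (M ^ 2) / y ^ (M ^ 2) := by
  rw [Fin.prod_univ_eq_prod_range
    (fun j => (if j < M then x else y) ^ ((2 * M : ℕ) - 1 - 2 * j : ℤ)), two_mul, prod_range_add]
  have hlow : ∀ j ∈ range M, (if j < M then x else y) ^ ((M + M : ℕ) - 1 - 2 * j : ℤ) =
      x ^ ((2 * M - 1 : ℤ) - 2 * j) := fun j hj => by
    rw [if_pos (mem_range.mp hj)]
    push_cast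
    ring_nf
  have hhigh : ∀ j ∈ range M,
      (if M + j < M then x else y) ^ ((M + M : ℕ) - 1 - 2 * (M + j : ℕ) : ℤ) =
        y ^ ((-1 : ℤ) - 2 * j) := fun j _ => by
    rw [if_neg (by omega)]
    push_cast
    ring_nf
  rw [prod_congr rfl hlow, prod_congr rfl hhigh, prod_range_zpow_sub_two_mul hx,
    prod_range_zpow_sub_two_mul hy, div_eq_mul_inv, ← zpow_natCast, ← zpow_natCast, ← zpow_neg]
  congr 2 <;> push_cast <;> ring

theorem four_mul_le_of_lt {c : ℕ → ℝ} {n : ℕ} (hc : ∀ j, 0 ≤ c j)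
    (hstep : ∀ j, j + 1 < n → 4 * c (j + 1) ≤ c j) {j k : ℕ} (hjk : j < k) (hk : k < n) :
    4 * c k ≤ c j := by
  induction k, hjk using Nat.le_induction with
  | base => exact hstep j hk
  | succ k hjk ih => linarith [hstep k hk, ih (by omega), hc k]

noncomputable def cornerScale (M j : ℕ) : ℝ :=
  if j < M then (4 ^ (j + 1))⁻¹ else 2 * 4 ^ (2 * M - 1 - j)

noncomputable def corner (M : ℕ) (a b : ℝ) (j : ℕ) : ℝ :=
  cornerScale M j * if j < M then b else a

section Corner
variable {M : ℕ} {a b : ℝ}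

theorem corner_pos (ha : 0 < a) (hb : 0 < b) (j : ℕ) : 0 < corner M a b j := by
  unfold corner cornerScale
  split_ifs <;> positivity

theorem four_mul_corner_succ_le (hab : 2 * 4 ^ (2 * M) * a ≤ b) {j : ℕ} (hj : j + 1 < 2 * M) :
    4 * corner M a b (j + 1) ≤ corner M a b j := by
  unfold corner cornerScale
  rcases lt_trichotomy (j + 1) M with h | rfl | h
  · simp only [if_pos h, if_pos (by omega : j < M), pow_succ]
    field_simp
    rfl
  · simp only [lt_irrefl, if_false, if_pos (Nat.lt_succ_self j)]
    rw [show 2 * (j + 1) - 1 - (j + 1) = j by omega, le_inv_mul_iff₀ (by positivity)]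
    calc 4 ^ (j + 1) * (4 * (2 * 4 ^ j * a)) = 2 * 4 ^ (2 * (j + 1)) * a := by ring
      _ ≤ b := hab
  · simp only [if_neg (by omega : ¬ j + 1 < M), if_neg (by omega : ¬ j < M),
      show 2 * M - 1 - j = 2 * M - 1 - (j + 1) + 1 by omega, pow_succ]
    linarith

variable (ha : 0 < a) (hb : 0 < b) (hab : 2 * 4 ^ (2 * M) * a ≤ b)
include ha hb hab

theorem four_mul_corner_le_of_lt {j k : ℕ} (hjk : j < k) (hk : k < 2 * M) :
    4 * corner M a b k ≤ corner M a b j :=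
  four_mul_le_of_lt (fun j => (corner_pos ha hb j).le) (fun _ => four_mul_corner_succ_le hab)
    hjk hk

theorem corner_le_corner_of_le {j k : ℕ} (hjk : j ≤ k) (hk : k < 2 * M) :
    corner M a b k ≤ corner M a b j := by
  rcases hjk.eq_or_lt with rfl | hjk
  · rfl
  · linarith [four_mul_corner_le_of_lt ha hb hab hjk hk, corner_pos (M := M) ha hb k]

theorem lt_corner {j : ℕ} (hj : j < 2 * M) : a < corner M a b j := by
  have hlast : corner M a b (2 * M - 1) = 2 * a := by
    simp [corner, cornerScale, show ¬ 2 * M - 1 < M by omega]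
  linarith [corner_le_corner_of_le ha hb hab (by omega : j ≤ 2 * M - 1) (by omega)]

theorem two_mul_corner_lt {j : ℕ} (hj : j < 2 * M) : 2 * corner M a b j < b := by
  have hfirst : corner M a b 0 = b / 4 := by
    simp [corner, cornerScale, show 0 < M by omega]
    ring
  linarith [corner_le_corner_of_le ha hb hab (Nat.zero_le j) hj]

end Corner

theorem integral_weight_le (M : ℕ) {a b : ℝ} (ha : 0 < a) (hab : a ≤ b) :
    ∫ σ in orderedTuples (2 * M) a b, weight σ ≤ b ^ (M ^ 2) / a ^ (M ^ 2) := by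
  refine (integral_weight_le_prod_integral ha).trans ?_
  rw [← prod_ite_zpow (M := M) (ha.trans_le hab).ne' ha.ne']
  refine prod_le_prod (fun j _ => setIntegral_nonneg measurableSet_Icc fun x hx =>
    (zpow_pos (ha.trans_le hx.1) _).le) fun j _ => ?_
  split_ifs with hj
  · exact integral_Icc_zpow_sub_one_le_of_pos ha hab (by omega)
  · exact integral_Icc_zpow_sub_one_le_of_neg ha hab (by omega)

noncomputable def lowerConst (M : ℕ) : ℝ :=
  ∏ j : Fin (2 * M), ((2 ^ (2 * M))⁻¹ * (3 / 4) ^ (2 * M - 1 - j : ℕ) *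
    cornerScale M j ^ (((2 * M : ℕ) : ℤ) - 1 - 2 * j))

theorem lowerConst_pos (M : ℕ) : 0 < lowerConst M :=
  prod_pos fun j _ => by unfold cornerScale; split_ifs <;> positivity

theorem lowerConst_mul_le_integral_weight (M : ℕ) {a b : ℝ} (ha : 0 < a)
    (hab : 2 * 4 ^ (2 * M) * a ≤ b) :
    lowerConst M * (b ^ (M ^ 2) / a ^ (M ^ 2)) ≤
      ∫ σ in orderedTuples (2 * M) a b, weight σ := by
  have hb : 0 < b := lt_of_lt_of_le (by positivity) hab
  refine le_trans (le_of_eq ?_) (prod_le_integral_weight (c := fun j => corner M a b j)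
    (fun j k hjk => four_mul_corner_le_of_lt ha hb hab hjk k.isLt) ha
    (fun j => lt_corner ha hb hab j.isLt) fun j => two_mul_corner_lt ha hb hab j.isLt)
  rw [lowerConst, ← prod_ite_zpow hb.ne' ha.ne', ← prod_mul_distrib]
  refine prod_congr rfl fun j _ => ?_
  rw [corner, mul_zpow]
  ring

end VolI

theorem stmt1_general (N : ℕ) (heven : Even N) :
    ∃ C₁ C₂ T : ℝ, 0 < C₁ ∧ 0 < C₂ ∧ 1 < T ∧
      ∀ R₁ R₂ : ℝ, 0 < R₁ → 0 < R₂ → T ≤ R₁ * R₂ →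
        C₁ ≤ volI N R₁ R₂ / (R₁ * R₂) ^ ((N : ℝ) ^ 2 / 4) ∧
        volI N R₁ R₂ / (R₁ * R₂) ^ ((N : ℝ) ^ 2 / 4) ≤ C₂ := by
  obtain ⟨M, rfl⟩ : ∃ M, N = 2 * M := ⟨N / 2, by have := Nat.even_iff.mp heven; omega⟩
  have h4 : (1 : ℝ) ≤ 4 ^ (2 * M) := one_le_pow₀ (by norm_num)
  refine ⟨VolI.lowerConst M, 1, 2 * 4 ^ (2 * M), VolI.lowerConst_pos M, one_pos, by linarith, ?_⟩
  intro R₁ R₂ h₁ h₂ hT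
  have hratio : R₁ ^ (M ^ 2) / (1 / R₂) ^ (M ^ 2) =
      (R₁ * R₂) ^ (((2 * M : ℕ) : ℝ) ^ 2 / 4) := by
    rw [show ((2 * M : ℕ) : ℝ) ^ 2 / 4 = ((M ^ 2 : ℕ) : ℝ) by push_cast; ring, rpow_natCast,
      one_div, inv_pow, div_inv_eq_mul, mul_pow]
  have hpos : 0 < (R₁ * R₂) ^ (((2 * M : ℕ) : ℝ) ^ 2 / 4) := by positivity
  have hab : 2 * 4 ^ (2 * M) * (1 / R₂) ≤ R₁ := by
    rwa [mul_one_div, div_le_iff₀ h₂]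
  rw [le_div_iff₀ hpos, div_le_iff₀ hpos, one_mul, ← hratio, VolI.volI_eq]
  exact ⟨VolI.lowerConst_mul_le_integral_weight M (by positivity) hab,
    VolI.integral_weight_le M (by positivity)
      ((le_mul_of_one_le_left (by positivity) (by linarith)).trans hab)⟩

theorem stmt1 (N : ℕ) (hN : 2 ≤ N) (heven : Even N) :
    ∃ C₁ C₂ T : ℝ, 0 < C₁ ∧ 0 < C₂ ∧ 1 < T ∧
      ∀ R₁ R₂ : ℝ, 0 < R₁ → 0 < R₂ → T ≤ R₁ * R₂ →
        C₁ ≤ volI N R₁ R₂ / (R₁ * R₂) ^ ((N : ℝ) ^ 2 / 4) ∧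
        volI N R₁ R₂ / (R₁ * R₂) ^ ((N : ℝ) ^ 2 / 4) ≤ C₂ :=
  stmt1_general N heven
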